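/- arXiv:1510.05380 — 2 statements merged into one kernel-verified Lean document; each statement's English description precedes it below -/
import Mathlib

section
/- (Lemma 3.1, sufficiency part.) Let S0 be a q×q real matrix with spectral radius L = ρ(S0) > 0, and let H be an N×N real matrix such that 0 is not a complex eigenvalue of H. For each complex eigenvalue h of H write Δ(h) = |h|²/L² − (Im h)². Suppose Δ(h) > 0 for every complex eigenvalue h of H, and suppose μ is a real number satisfying, for every complex eigenvalue h of H, (Re h − √Δ(h))/|h|² < μ < (Re h + √Δ(h))/|h|². Then the matrix I_N⊗S0 − μ(H⊗S0) is Schur. -/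
open Matrix Kronecker

/-- The complex eigenvalues (spectrum of the complexification) of a real square matrix. -/
def specC {ι : Type} [Fintype ι] [DecidableEq ι] (M : Matrix ι ι ℝ) : Set ℂ :=
  spectrum ℂ (M.map (fun x => (x : ℂ)))

/-- A real square matrix is Schur if all its complex eigenvalues have modulus `< 1`. -/
def IsSchur {ι : Type} [Fintype ι] [DecidableEq ι] (M : Matrix ι ι ℝ) : Prop :=
  ∀ z ∈ specC M, ‖z‖ < 1

/-!
A nonzero eigenvalue of `A ⊗ B` is a product `a * b` of eigenvalues of `A` and `B`: since `A ⊗ B`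
and `A ⊗ I` commute, they have a common eigenvector `v`, and then `(I ⊗ B) v = (z / a) v`.
For `A = I - μ H` this gives the eigenvalues `(1 - μ h) b` with `h ∈ σ(H)` and `|b| ≤ L`, so it
suffices that `L |1 - μ h| < 1`. The identity `|h|² |1 - μ h|² = (μ |h|² - Re h)² + (Im h)²` turns
this into `(μ |h|² - Re h)² < Δ(h)`, which is exactly the hypothesis on `μ`.
-/

namespace Module.End

variable {K V : Type*} [Field K] [AddCommGroup V] [Module K V]

theorem exists_hasEigenvector_of_commute [IsAlgClosed K] [FiniteDimensional K V]
    {f g : End K V} (hfg : Commute f g) {μ : K} (hμ : f.HasEigenvalue μ) :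
    ∃ ν v, f.HasEigenvector μ v ∧ g.HasEigenvector ν v := by
  have hmaps : Set.MapsTo g (f.eigenspace μ) (f.eigenspace μ) :=
    mapsTo_genEigenspace_of_comm hfg μ 1
  have : Nontrivial (f.eigenspace μ) := Submodule.nontrivial_iff_ne_bot.mpr hμ
  obtain ⟨ν, hν⟩ := exists_eigenvalue (g.restrict hmaps)
  obtain ⟨w, hw⟩ := hν.exists_hasEigenvector
  refine ⟨ν, w, ⟨w.2, by simpa using hw.2⟩, ?_, by simpa using hw.2⟩
  simpa using eigenspace_restrict_le_eigenspace g hmaps ν ⟨w, hw.1, rfl⟩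

end Module.End

open Pointwise in
theorem spectrum.one_sub_smul_eq {𝕜 A : Type*} [Field 𝕜] [Ring A] [Algebra 𝕜 A] [Nontrivial A]
    {a : A} (ha : (spectrum 𝕜 a).Nonempty) (k : 𝕜) :
    spectrum 𝕜 (1 - k • a) = 1 - k • spectrum 𝕜 a := by
  rw [← spectrum.smul_eq_smul k a ha, ← map_one (algebraMap 𝕜 A), ← spectrum.singleton_sub_eq]
  rfl

namespace Matrix

variable {R : Type*} [CommRing R] {m n : Type*} [Fintype m] [Fintype n] [DecidableEq m]
  [DecidableEq n]

theorem mem_spectrum_of_mulVec_eq_smul {M : Matrix n n R} {c : R} {v : n → R} (hv : v ≠ 0)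
    (hMv : M *ᵥ v = c • v) : c ∈ spectrum R M := by
  rintro ⟨u, hu⟩
  have huv : (u : Matrix n n R) *ᵥ v = 0 := by
    rw [hu, Algebra.algebraMap_eq_smul_one, sub_mulVec, smul_mulVec, one_mulVec, hMv,
      sub_self]
  apply hv
  rw [← one_mulVec v, ← u.inv_mul, ← mulVec_mulVec, huv, mulVec_zero]

theorem spectrum_kronecker_one_subset (A : Matrix m m R) :
    spectrum R (A ⊗ₖ (1 : Matrix n n R)) ⊆ spectrum R A := by
  intro c
  simp only [spectrum.mem_iff, Algebra.algebraMap_eq_smul_one, not_imp_not]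
  intro hA
  have hsub : (c • 1 - A) ⊗ₖ (1 : Matrix n n R) = c • 1 - A ⊗ₖ 1 := by
    rw [← one_kronecker_one, ← smul_kronecker]; ext; simp [sub_mul]
  rw [← hsub, isUnit_iff_isUnit_det, det_kronecker, det_one, one_pow, mul_one]
  exact ((isUnit_iff_isUnit_det _).mp hA).pow _

theorem spectrum_one_kronecker_subset (B : Matrix n n R) :
    spectrum R ((1 : Matrix m m R) ⊗ₖ B) ⊆ spectrum R B := by
  intro c
  simp only [spectrum.mem_iff, Algebra.algebraMap_eq_smul_one, not_imp_not]
  intro hB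
  have hsub : (1 : Matrix m m R) ⊗ₖ (c • 1 - B) = c • 1 - 1 ⊗ₖ B := by
    rw [← one_kronecker_one, ← kronecker_smul]; ext; simp [mul_sub]
  rw [← hsub, isUnit_iff_isUnit_det, det_kronecker, det_one, one_pow, one_mul]
  exact ((isUnit_iff_isUnit_det _).mp hB).pow _

open Module.End Pointwise in
theorem mem_spectrum_mul_of_mem_spectrum_kronecker {K : Type*} [Field K] [IsAlgClosed K]
    {A : Matrix m m K} {B : Matrix n n K} {z : K} (hz : z ∈ spectrum K (A ⊗ₖ B)) (hz0 : z ≠ 0) :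
    z ∈ spectrum K A * spectrum K B := by
  have hcomm : Commute (A ⊗ₖ B) (A ⊗ₖ (1 : Matrix n n K)) := by
    simp only [Commute, SemiconjBy, ← mul_kronecker_mul, mul_one, one_mul]
  have hz' : HasEigenvalue (toLin' (A ⊗ₖ B)) z := by
    rwa [hasEigenvalue_iff_mem_spectrum, spectrum_toLin']
  obtain ⟨a, v, hvz, hva⟩ :=
    exists_hasEigenvector_of_commute (hcomm.map toLinAlgEquiv') hz'
  have hv0 : v ≠ 0 := hva.2
  replace hvz : (A ⊗ₖ B) *ᵥ v = z • v := hvz.apply_eq_smul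
  replace hva : (A ⊗ₖ 1) *ᵥ v = a • v := hva.apply_eq_smul
  have hBv : a • ((1 ⊗ₖ B) *ᵥ v) = z • v := by
    rw [← hvz, ← mulVec_smul, ← hva, mulVec_mulVec, ← mul_kronecker_mul, one_mul, mul_one]
  have ha0 : a ≠ 0 := by
    rintro rfl
    rw [zero_smul, eq_comm, smul_eq_zero] at hBv
    exact hBv.elim hz0 hv0
  refine ⟨a, spectrum_kronecker_one_subset A (mem_spectrum_of_mulVec_eq_smul hv0 hva),
    z / a, spectrum_one_kronecker_subset B (mem_spectrum_of_mulVec_eq_smul hv0 ?_),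
    mul_div_cancel₀ z ha0⟩
  rw [div_eq_inv_mul, mul_smul, ← hBv, smul_smul, inv_mul_cancel₀ ha0, one_smul]

end Matrix

theorem norm_one_sub_mul_mul_lt_one {h : ℂ} {L μ : ℝ} (hL : 0 < L) (hh : h ≠ 0)
    (hΔ : 0 ≤ ‖h‖ ^ 2 / L ^ 2 - h.im ^ 2)
    (hμ : μ ∈ Set.Ioo ((h.re - √(‖h‖ ^ 2 / L ^ 2 - h.im ^ 2)) / ‖h‖ ^ 2)
      ((h.re + √(‖h‖ ^ 2 / L ^ 2 - h.im ^ 2)) / ‖h‖ ^ 2)) :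
    ‖1 - μ * h‖ * L < 1 := by
  have hn : 0 < ‖h‖ ^ 2 := by positivity
  obtain ⟨hlo, hhi⟩ := hμ
  rw [div_lt_iff₀ hn] at hlo
  rw [lt_div_iff₀ hn] at hhi
  have hsq : (μ * ‖h‖ ^ 2 - h.re) ^ 2 < ‖h‖ ^ 2 / L ^ 2 - h.im ^ 2 := by
    rw [← Real.sq_sqrt hΔ]
    exact sq_lt_sq' (by linarith) (by linarith)
  have hid : ‖h‖ ^ 2 * ‖1 - μ * h‖ ^ 2 = (μ * ‖h‖ ^ 2 - h.re) ^ 2 + h.im ^ 2 := by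
    simp only [Complex.sq_norm, Complex.normSq_apply, Complex.sub_re, Complex.sub_im,
      Complex.mul_re, Complex.mul_im, Complex.ofReal_re, Complex.ofReal_im, Complex.one_re,
      Complex.one_im]
    ring
  have hsq' : (‖1 - μ * h‖ * L) ^ 2 < 1 := by
    refine lt_of_mul_lt_mul_left ?_ hn.le
    calc ‖h‖ ^ 2 * (‖1 - μ * h‖ * L) ^ 2 = (‖h‖ ^ 2 * ‖1 - μ * h‖ ^ 2) * L ^ 2 := by ring
      _ < (‖h‖ ^ 2 / L ^ 2) * L ^ 2 := by gcongr; linarith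
      _ = ‖h‖ ^ 2 * 1 := by field_simp
  exact (pow_lt_one_iff_of_nonneg (by positivity) two_ne_zero).mp hsq'

theorem observer_gain_sufficient_general (N q : ℕ) (hN : 0 < N)
    (S0 : Matrix (Fin q) (Fin q) ℝ) (H : Matrix (Fin N) (Fin N) ℝ)
    (L : ℝ) (hL : IsGreatest ((fun z : ℂ => ‖z‖) '' specC S0) L) (hLpos : 0 < L)
    (hH0 : (0 : ℂ) ∉ specC H)
    (hΔ : ∀ h ∈ specC H, 0 < ‖h‖ ^ 2 / L ^ 2 - h.im ^ 2)
    (μ : ℝ)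
    (hμ : ∀ h ∈ specC H,
      (h.re - Real.sqrt (‖h‖ ^ 2 / L ^ 2 - h.im ^ 2)) / ‖h‖ ^ 2 < μ ∧
      μ < (h.re + Real.sqrt (‖h‖ ^ 2 / L ^ 2 - h.im ^ 2)) / ‖h‖ ^ 2) :
    IsSchur ((1 : Matrix (Fin N) (Fin N) ℝ) ⊗ₖ S0 - μ • (H ⊗ₖ S0)) := by
  intro z hz
  rcases eq_or_ne z 0 with rfl | hz0
  · simp
  have hcomplex : ((1 : Matrix (Fin N) (Fin N) ℝ) ⊗ₖ S0 - μ • (H ⊗ₖ S0)).map Complex.ofReal =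
      (1 - (μ : ℂ) • H.map Complex.ofReal) ⊗ₖ S0.map Complex.ofReal := by
    ext ⟨i, j⟩ ⟨k, l⟩
    simp [one_apply, sub_mul, mul_assoc, apply_ite Complex.ofReal]
  rw [specC, hcomplex] at hz
  obtain ⟨a, ha, b, hb, rfl⟩ := mem_spectrum_mul_of_mem_spectrum_kronecker hz hz0
  have : Nonempty (Fin N) := Fin.pos_iff_nonempty.mp hN
  rw [spectrum.one_sub_smul_eq (spectrum.nonempty_of_isAlgClosed_of_finiteDimensional ℂ _)] at ha
  obtain ⟨_, rfl, _, ⟨h, hh, rfl⟩, rfl⟩ := ha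
  have hh0 : h ≠ 0 := by rintro rfl; exact hH0 hh
  calc ‖(1 - μ • h) * b‖ = ‖1 - μ * h‖ * ‖b‖ := by rw [norm_mul, Complex.real_smul]
    _ ≤ ‖1 - μ * h‖ * L := by gcongr; exact hL.2 ⟨b, hb, rfl⟩
    _ < 1 := norm_one_sub_mul_mul_lt_one hLpos hh0 (hΔ h hh).le (hμ h hh)

/-- **Lemma 3.1, sufficiency part.** With `L = ρ(S0) > 0`, `0 ∉ σ(H)` and
`Δ(h) = |h|²/L² − (Im h)²`, if `Δ(h) > 0` for every complex eigenvalue `h` of `H` and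
`μ` satisfies `(Re h − √Δ(h))/|h|² < μ < (Re h + √Δ(h))/|h|²` for every such `h`, then
`I_N ⊗ S0 − μ (H ⊗ S0)` is Schur. -/
theorem observer_gain_sufficient (N q : ℕ) (hN : 0 < N) (hq : 0 < q)
    (S0 : Matrix (Fin q) (Fin q) ℝ) (H : Matrix (Fin N) (Fin N) ℝ)
    (L : ℝ) (hL : IsGreatest ((fun z : ℂ => ‖z‖) '' specC S0) L) (hLpos : 0 < L)
    (hH0 : (0 : ℂ) ∉ specC H)
    (hΔ : ∀ h ∈ specC H, 0 < ‖h‖ ^ 2 / L ^ 2 - h.im ^ 2)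
    (μ : ℝ)
    (hμ : ∀ h ∈ specC H,
      (h.re - Real.sqrt (‖h‖ ^ 2 / L ^ 2 - h.im ^ 2)) / ‖h‖ ^ 2 < μ ∧
      μ < (h.re + Real.sqrt (‖h‖ ^ 2 / L ^ 2 - h.im ^ 2)) / ‖h‖ ^ 2) :
    IsSchur ((1 : Matrix (Fin N) (Fin N) ℝ) ⊗ₖ S0 - μ • (H ⊗ₖ S0)) :=
  observer_gain_sufficient_general N q hN S0 H L hL hLpos hH0 hΔ μ hμ
end

section
/- Let H be an N×N real symmetric positive definite matrix and let S0 be a q×q real matrix all of whose complex eigenvalues have modulus exactly 1. If there exists a real number μ such that the matrix I_N⊗S0 − μ(H⊗I_q) is Schur, then either every complex eigenvalue of S0 has strictly positive real part, or every complex eigenvalue of S0 has strictly negative real part. -/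
open Matrix Kronecker

/-!
If `H w = h w` with `w` real and `S₀ v = λ v`, then `vec (v wᵀ)` is an eigenvector of
`I ⊗ S₀ − μ (H ⊗ I)` with eigenvalue `λ − μh`. The Schur property thus gives
`|λ − μh| < 1 = |λ|` for every eigenvalue `λ` of `S₀`, i.e. `(μh)² < 2μh · Re λ`, so `Re λ` has
the sign of the real number `μh`, which does not depend on `λ`.
-/

namespace Matrix

theorem mem_spectrum_iff_exists_mulVec_eq_smul {K n : Type*} [Field K] [Fintype n]
    [DecidableEq n] {A : Matrix n n K} {z : K} :
    z ∈ spectrum K A ↔ ∃ v : n → K, v ≠ 0 ∧ A *ᵥ v = z • v := by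
  rw [← spectrum_toLin', ← Module.End.hasEigenvalue_iff_mem_spectrum,
    Module.End.hasEigenvalue_iff, Submodule.ne_bot_iff]
  simp [and_comm]

theorem IsSymm.exists_mulVec_eq_smul {n : Type*} [Fintype n] [DecidableEq n] [Nonempty n]
    {H : Matrix n n ℝ} (hH : H.IsSymm) : ∃ (h : ℝ) (w : n → ℝ), w ≠ 0 ∧ H *ᵥ w = h • w := by
  have hH' : H.IsHermitian := isHermitian_iff_isSymm.mpr hH
  obtain ⟨i⟩ := ‹Nonempty n›
  exact ⟨hH'.eigenvalues i, hH'.eigenvectorBasis i,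
    by simpa using hH'.eigenvectorBasis.orthonormal.ne_zero i, hH'.mulVec_eigenvectorBasis i⟩

theorem map_mulVec_eq_smul {R S m : Type*} [CommRing R] [CommRing S] [Fintype m]
    (f : R →+* S) {H : Matrix m m R} {h : R} {w : m → R}
    (hw : H *ᵥ w = h • w) : H.map f *ᵥ (f ∘ w) = f h • (f ∘ w) := by
  funext i
  rw [← RingHom.map_mulVec, hw]
  simp

section Kronecker

variable {R S : Type*} [CommRing R] [CommRing S] {m n : Type*} [DecidableEq m] [DecidableEq n]

theorem map_one_kronecker_sub_smul_kronecker_one (f : R →+* S) (A : Matrix n n R)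
    (B : Matrix m m R) (r : R) :
    (1 ⊗ₖ A - r • (B ⊗ₖ 1)).map f = 1 ⊗ₖ A.map f - f r • (B.map f ⊗ₖ 1) := by
  ext ⟨i, j⟩ ⟨k, l⟩
  simp [one_apply, apply_ite f]

variable [Fintype m] [Fintype n]

theorem one_kronecker_sub_smul_kronecker_one_mulVec_vec (A : Matrix n n R) (B : Matrix m m R)
    (r : R) (X : Matrix n m R) :
    (1 ⊗ₖ A - r • (B ⊗ₖ 1)) *ᵥ vec X = vec (A * X - r • (X * Bᵀ)) := by
  rw [sub_mulVec, smul_mulVec, kronecker_mulVec_vec, kronecker_mulVec_vec, transpose_one,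
    Matrix.mul_one, Matrix.one_mul]
  rfl

theorem one_kronecker_sub_smul_kronecker_one_mulVec_vec_vecMulVec {A : Matrix n n R}
    {B : Matrix m m R} (r : R) {a b : R} {v : n → R} {w : m → R}
    (hv : A *ᵥ v = a • v) (hw : B *ᵥ w = b • w) :
    (1 ⊗ₖ A - r • (B ⊗ₖ 1)) *ᵥ vec (vecMulVec v w) = (a - r * b) • vec (vecMulVec v w) := by
  rw [one_kronecker_sub_smul_kronecker_one_mulVec_vec, mul_vecMulVec, vecMulVec_mul,
    vecMul_transpose, hv, hw, smul_vecMulVec, vecMulVec_smul]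
  ext
  simp [sub_mul, mul_assoc]

end Kronecker

end Matrix

theorem sub_mem_specC_one_kronecker_sub_smul_kronecker_one {m n : Type} [Fintype m]
    [Fintype n] [DecidableEq m] [DecidableEq n] {S : Matrix n n ℝ} {H : Matrix m m ℝ}
    {lam : ℂ} (hlam : lam ∈ specC S) {h : ℝ} {w : m → ℝ} (hw0 : w ≠ 0) (hw : H *ᵥ w = h • w)
    (μ : ℝ) : lam - ↑(μ * h) ∈ specC (1 ⊗ₖ S - μ • (H ⊗ₖ 1)) := by
  rw [specC, mem_spectrum_iff_exists_mulVec_eq_smul] at hlam ⊢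
  obtain ⟨v, hv0, hv⟩ := hlam
  have hwC0 : ((↑) ∘ w : m → ℂ) ≠ 0 := by
    simpa [funext_iff] using hw0
  have hwC : H.map (↑) *ᵥ ((↑) ∘ w) = (h : ℂ) • ((↑) ∘ w : m → ℂ) :=
    map_mulVec_eq_smul Complex.ofRealHom hw
  have hmap : (1 ⊗ₖ S - μ • (H ⊗ₖ 1)).map ((↑) : ℝ → ℂ) =
      1 ⊗ₖ S.map (↑) - (μ : ℂ) • (H.map (↑) ⊗ₖ 1) :=
    map_one_kronecker_sub_smul_kronecker_one Complex.ofRealHom S H μ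
  refine ⟨vec (vecMulVec v ((↑) ∘ w)), ?_, ?_⟩
  · obtain ⟨i, hi⟩ := Function.ne_iff.mp hv0
    obtain ⟨j, hj⟩ := Function.ne_iff.mp hwC0
    exact Function.ne_iff.mpr ⟨(j, i), mul_ne_zero hi hj⟩
  · rw [hmap, one_kronecker_sub_smul_kronecker_one_mulVec_vec_vecMulVec _ hv hwC,
      Complex.ofReal_mul]

theorem Complex.sq_lt_two_mul_mul_re_of_norm_sub_lt_norm {z : ℂ} {c : ℝ}
    (h : ‖z - c‖ < ‖z‖) : c ^ 2 < 2 * c * z.re := by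
  have hsq := pow_lt_pow_left₀ h (norm_nonneg _) two_ne_zero
  simp only [Complex.sq_norm, Complex.normSq_apply, Complex.sub_re, Complex.sub_im,
    Complex.ofReal_re, Complex.ofReal_im] at hsq
  linarith

theorem naive_observer_same_sign_general (N q : ℕ) (hN : 0 < N)
    (H : Matrix (Fin N) (Fin N) ℝ) (hsymm : H.IsSymm)
    (S0 : Matrix (Fin q) (Fin q) ℝ)
    (hmod : ∀ lam ∈ specC S0, ‖lam‖ = 1)
    (hex : ∃ μ : ℝ, IsSchur ((1 : Matrix (Fin N) (Fin N) ℝ) ⊗ₖ S0 -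
      μ • (H ⊗ₖ (1 : Matrix (Fin q) (Fin q) ℝ)))) :
    (∀ lam ∈ specC S0, 0 < lam.re) ∨ (∀ lam ∈ specC S0, lam.re < 0) := by
  obtain ⟨μ, hμ⟩ := hex
  have : Nonempty (Fin N) := ⟨⟨0, hN⟩⟩
  obtain ⟨h, w, hw0, hw⟩ := hsymm.exists_mulVec_eq_smul
  have key : ∀ lam ∈ specC S0, (μ * h) ^ 2 < 2 * (μ * h) * lam.re := fun lam hlam =>
    Complex.sq_lt_two_mul_mul_re_of_norm_sub_lt_norm <| by
      rw [hmod lam hlam]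
      exact hμ _ (sub_mem_specC_one_kronecker_sub_smul_kronecker_one hlam hw0 hw μ)
  rcases lt_trichotomy (μ * h) 0 with hneg | hzero | hpos
  · exact .inr fun lam hlam => by nlinarith [key lam hlam]
  · exact .inl fun lam hlam => absurd (key lam hlam) (by simp [hzero])
  · exact .inl fun lam hlam => by nlinarith [key lam hlam]

/-- Let `H` be real symmetric positive definite and let every complex
eigenvalue of `S0` have modulus exactly `1`. If some real `μ` makes
`I_N ⊗ S0 − μ (H ⊗ I_q)` Schur, then either all complex eigenvalues of `S0` have
strictly positive real part, or all have strictly negative real part. -/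
theorem naive_observer_same_sign (N q : ℕ) (hN : 0 < N) (hq : 0 < q)
    (H : Matrix (Fin N) (Fin N) ℝ) (hsymm : H.IsSymm) (hpd : H.PosDef)
    (S0 : Matrix (Fin q) (Fin q) ℝ)
    (hmod : ∀ lam ∈ specC S0, ‖lam‖ = 1)
    (hex : ∃ μ : ℝ, IsSchur ((1 : Matrix (Fin N) (Fin N) ℝ) ⊗ₖ S0 -
      μ • (H ⊗ₖ (1 : Matrix (Fin q) (Fin q) ℝ)))) :
    (∀ lam ∈ specC S0, 0 < lam.re) ∨ (∀ lam ∈ specC S0, lam.re < 0) :=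
  naive_observer_same_sign_general N q hN H hsymm S0 hmod hex
end
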